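/- For every integer n ≥ 1, κ_{2n−1}² κ_{2n}² = (1/4) a_n^{−2} b_n^{−2}. -/

import Mathlib

open MeasureTheory Complex Filter

noncomputable section

/-- The Laurent "cosine" `(z^n + z^(-n))/2`, equal to `cos (n θ)` for `z = e^(iθ)`. -/
def cosL (n : ℕ) (z : ℂ) : ℂ := (z ^ n + (z ^ n)⁻¹) / 2

/-- The Laurent "sine" `(z^n - z^(-n))/(2 i)`, equal to `sin (n θ)` for `z = e^(iθ)`. -/
def sinL (n : ℕ) (z : ℂ) : ℂ := (z ^ n - (z ^ n)⁻¹) / (2 * I)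

/-- The real pairing `⟨f, g⟩_R = ∫ f g dμ`. -/
def innR (μ : Measure ℂ) (f g : ℂ → ℂ) : ℂ := ∫ τ, f τ * g τ ∂μ

/-- A nontrivial probability measure `μ` on the unit circle (infinite support), together
with the data produced by the Gram–Schmidt procedure applied (w.r.t. `⟨·,·⟩_R`) to the
ordered trigonometric system `{1, sin θ, cos θ, …, sin nθ, cos nθ, …}` (written as
Laurent polynomials via `sin nθ = (z^n - z^(-n))/(2i)`, `cos nθ = (z^n + z^(-n))/2`):
`b n * pii n` is `sin nθ` minus its orthogonal projection onto the span of the previous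
elements; `a n * sig n` is `cos nθ` minus its orthogonal projection onto the span of the
previous elements (including `sin nθ`); `a n, b n > 0` are the corresponding norms, so
that `sig n`, `pii n` are the orthonormal trigonometric polynomials; and
`β n = ⟨cos nθ, (b n)⁻¹ pii n⟩_R`.  Conventions: `sig 0 = 1`, `pii 0 = 0`, `β 0 = 0`,
`a 0 = b 0 = 1`. -/
structure OTP where
  μ : Measure ℂ
  prob : IsProbabilityMeasure μ
  circ : μ {z : ℂ | ‖z‖ = 1}ᶜ = 0
  nontriv : ∀ s : Finset ℂ, μ ((s : Set ℂ))ᶜ ≠ 0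
  a : ℕ → ℝ
  b : ℕ → ℝ
  β : ℕ → ℝ
  sig : ℕ → ℂ → ℂ
  pii : ℕ → ℂ → ℂ
  ha : ∀ n, 0 < a n
  hb : ∀ n, 0 < b n
  a_zero : a 0 = 1
  b_zero : b 0 = 1
  β_zero : β 0 = 0
  sig_zero : ∀ z, sig 0 z = 1
  pii_zero : ∀ z, pii 0 z = 0
  pii_span : ∀ n, 1 ≤ n → ∃ c d : ℕ → ℝ, ∀ z : ℂ, z ≠ 0 →
    (b n : ℂ) * pii n z =
      sinL n z + ∑ k ∈ Finset.range n, ((c k : ℂ) * cosL k z + (d k : ℂ) * sinL k z)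
  pii_orth : ∀ n, 1 ≤ n → ∀ k < n,
    innR μ (fun z => (b n : ℂ) * pii n z) (cosL k) = 0 ∧
    innR μ (fun z => (b n : ℂ) * pii n z) (sinL k) = 0
  b_norm : ∀ n, 1 ≤ n →
    ((b n : ℂ)) ^ 2 = innR μ (fun z => (b n : ℂ) * pii n z) (fun z => (b n : ℂ) * pii n z)
  sig_span : ∀ n, 1 ≤ n → ∃ c d : ℕ → ℝ, ∃ e : ℝ, ∀ z : ℂ, z ≠ 0 →
    (a n : ℂ) * sig n z =
      cosL n z + (e : ℂ) * sinL n z +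
        ∑ k ∈ Finset.range n, ((c k : ℂ) * cosL k z + (d k : ℂ) * sinL k z)
  sig_orth : ∀ n, 1 ≤ n →
    (∀ k < n,
      innR μ (fun z => (a n : ℂ) * sig n z) (cosL k) = 0 ∧
      innR μ (fun z => (a n : ℂ) * sig n z) (sinL k) = 0) ∧
    innR μ (fun z => (a n : ℂ) * sig n z) (sinL n) = 0
  a_norm : ∀ n, 1 ≤ n →
    ((a n : ℂ)) ^ 2 = innR μ (fun z => (a n : ℂ) * sig n z) (fun z => (a n : ℂ) * sig n z)
  β_def : ∀ n, 1 ≤ n →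
    (β n : ℂ) = innR μ (cosL n) (fun z => ((b n : ℂ))⁻¹ * pii n z)

/-- The data of `OTP` together with the monic orthogonal polynomials on the unit circle:
`Φ n` is the (unique) monic polynomial of degree `n` with
`∫ conj (τ^j) * Φ n τ dμ = 0` for all `j < n`, and `κ n = ‖Φ n‖⁻¹ > 0` where
`‖Φ n‖² = ∫ |Φ n τ|² dμ`. -/
structure OPUC extends OTP where
  Φ : ℕ → Polynomial ℂ
  Φ_monic : ∀ n, (Φ n).Monic
  Φ_deg : ∀ n, (Φ n).natDegree = n
  Φ_orth : ∀ n, ∀ j < n, ∫ τ, (starRingEnd ℂ) (τ ^ j) * (Φ n).eval τ ∂μ = 0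
  κ : ℕ → ℝ
  κ_pos : ∀ n, 0 < κ n
  κ_def : ∀ n, (κ n) ^ 2 * ∫ τ, ‖(Φ n).eval τ‖ ^ 2 ∂μ = 1

/-!
Write `A = a_n σ_n` and `B = b_n π_n`. Both are orthogonal, for the real pairing, to every
trigonometric polynomial of degree `< n`, and up to such polynomials they are
`cos nθ - β_n sin nθ` and `sin nθ`; hence `⟨A, cos nθ⟩ = a_n²`, `⟨A, sin nθ⟩ = 0`,
`⟨B, cos nθ⟩ = β_n b_n²` and `⟨B, sin nθ⟩ = b_n²`.

For `F₁ = A + (i + β_n) B` the top part is `cos nθ + i sin nθ = z^n`, so `z^(n-1) F₁` is a monic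
polynomial of degree `2n - 1` on the circle; it is orthogonal to `1, z, …, z^(2n-2)` because
`∫ z^m F₁ dμ = 0` for `|m| < n`.
Choosing `F₂ = x A + y B` with leading Laurent coefficient `1` and `⟨F₂, z^n⟩ = 0` makes
`z^n F₂` monic of degree `2n` and orthogonal to `1, …, z^(2n-1)`. Two monic orthogonal polynomials
of the same degree have the same norm, and that norm is the moment `∫ z^(-n) F`; this gives
`‖Φ_{2n-1}‖² = a_n² + (1 + β_n²) b_n²` and `‖Φ_{2n}‖² = 4 a_n² b_n² / (a_n² + (1 + β_n²) b_n²)`.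
-/

open Polynomial ComplexConjugate

theorem sinL_eq (k : ℕ) (z : ℂ) : sinL k z = -I * (z ^ k - (z ^ k)⁻¹) / 2 := by
  rw [sinL, div_mul_eq_div_div_swap, div_I]
  ring

theorem pow_eq_cosL_add_I_mul_sinL (k : ℕ) (z : ℂ) : z ^ k = cosL k z + I * sinL k z := by
  rw [cosL, sinL_eq]
  linear_combination ((z ^ k - (z ^ k)⁻¹) / 2) * I_sq

theorem inv_pow_eq_cosL_sub_I_mul_sinL (k : ℕ) (z : ℂ) :
    (z ^ k)⁻¹ = cosL k z - I * sinL k z := by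
  rw [cosL, sinL_eq]
  linear_combination (-(z ^ k - (z ^ k)⁻¹) / 2) * I_sq

theorem mul_cosL_add_mul_sinL (p q : ℂ) (k : ℕ) (z : ℂ) :
    p * cosL k z + q * sinL k z = (p - I * q) / 2 * z ^ k + (p + I * q) / 2 * (z ^ k)⁻¹ := by
  rw [cosL, sinL_eq]
  ring

theorem norm_cosL_le_one {z : ℂ} (hz : ‖z‖ = 1) (k : ℕ) : ‖cosL k z‖ ≤ 1 := by
  have : ‖z ^ k + (z ^ k)⁻¹‖ ≤ 2 :=
    (norm_add_le _ _).trans (by simp [hz]; norm_num)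
  rw [cosL, norm_div]
  simp only [Complex.norm_ofNat]
  linarith

theorem norm_sinL_le_one {z : ℂ} (hz : ‖z‖ = 1) (k : ℕ) : ‖sinL k z‖ ≤ 1 := by
  have : ‖z ^ k - (z ^ k)⁻¹‖ ≤ 2 :=
    (norm_sub_le _ _).trans (by simp [hz]; norm_num)
  rw [sinL, norm_div]
  simp only [norm_mul, Complex.norm_ofNat, Complex.norm_I, mul_one]
  linarith

theorem measurable_cosL (k : ℕ) : Measurable (cosL k) := by
  unfold cosL; fun_prop

theorem measurable_sinL (k : ℕ) : Measurable (sinL k) := by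
  unfold sinL; fun_prop

def trigSum (n : ℕ) (c d : ℕ → ℂ) (z : ℂ) : ℂ :=
  ∑ k ∈ Finset.range n, (c k * cosL k z + d k * sinL k z)

theorem mul_trigSum_add_mul_trigSum (n : ℕ) (x y : ℂ) (c d c' d' : ℕ → ℂ) (z : ℂ) :
    x * trigSum n c d z + y * trigSum n c' d' z =
      trigSum n (fun k => x * c k + y * c' k) (fun k => x * d k + y * d' k) z := by
  simp only [trigSum, Finset.mul_sum, ← Finset.sum_add_distrib]
  exact Finset.sum_congr rfl fun k _ => by ring

def cosPoly (s k : ℕ) : ℂ[X] := (2⁻¹ : ℂ) • (X ^ (s + k) + X ^ (s - k))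

def sinPoly (s k : ℕ) : ℂ[X] := (-I / 2) • (X ^ (s + k) - X ^ (s - k))

def trigPoly (s n : ℕ) (c d : ℕ → ℂ) : ℂ[X] :=
  ∑ k ∈ Finset.range n, (c k • cosPoly s k + d k • sinPoly s k)

theorem eval_cosPoly {z : ℂ} (hz : z ≠ 0) {s k : ℕ} (hk : k ≤ s) :
    (cosPoly s k).eval z = z ^ s * cosL k z := by
  rw [cosPoly, cosL, eval_smul, eval_add, eval_pow, eval_pow, eval_X, pow_sub₀ _ hz hk, pow_add,
    smul_eq_mul]
  ring

theorem eval_sinPoly {z : ℂ} (hz : z ≠ 0) {s k : ℕ} (hk : k ≤ s) :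
    (sinPoly s k).eval z = z ^ s * sinL k z := by
  rw [sinPoly, sinL_eq, eval_smul, eval_sub, eval_pow, eval_pow, eval_X, pow_sub₀ _ hz hk, pow_add,
    smul_eq_mul]
  ring

theorem eval_trigPoly {z : ℂ} (hz : z ≠ 0) {s n : ℕ} (hn : n ≤ s + 1) (c d : ℕ → ℂ) :
    (trigPoly s n c d).eval z = z ^ s * trigSum n c d z := by
  simp only [trigPoly, trigSum, eval_finsetSum, Finset.mul_sum]
  refine Finset.sum_congr rfl fun k hk => ?_
  have hks : k ≤ s := by have := Finset.mem_range.mp hk; omega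
  rw [eval_add, eval_smul, eval_smul, eval_cosPoly hz hks, eval_sinPoly hz hks, smul_eq_mul,
    smul_eq_mul]
  ring

theorem trigPoly_mem_degreeLT (s n : ℕ) (c d : ℕ → ℂ) :
    trigPoly s n c d ∈ degreeLT ℂ (s + n) := by
  have hX : ∀ j, j < s + n → (X ^ j : ℂ[X]) ∈ degreeLT ℂ (s + n) := fun j hj => by
    rw [mem_degreeLT, degree_X_pow]; exact_mod_cast hj
  refine Submodule.sum_mem _ fun k hk => ?_
  have hk : k < n := Finset.mem_range.mp hk
  exact add_mem (Submodule.smul_mem _ _ (Submodule.smul_mem _ _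
      (add_mem (hX _ (by omega)) (hX _ (by omega)))))
    (Submodule.smul_mem _ _ (Submodule.smul_mem _ _
      (sub_mem (hX _ (by omega)) (hX _ (by omega)))))

theorem Polynomial.Monic.sub_X_pow_mem_degreeLT {R : Type*} [Ring R] [Nontrivial R] {p : R[X]}
    {N : ℕ} (hp : p.Monic) (hdeg : p.natDegree = N) : p - X ^ N ∈ degreeLT R N := by
  have hpN : p.degree = N := by rw [degree_eq_natDegree hp.ne_zero, hdeg]
  rw [mem_degreeLT, ← hpN]
  exact degree_sub_lt_left (by rw [hpN, degree_X_pow]) hp.ne_zero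
    (by rw [hp.leadingCoeff, leadingCoeff_X_pow])

theorem MeasureTheory.Integrable.mul_memLp_top {α 𝕜 : Type*} [MeasurableSpace α] [NormedRing 𝕜]
    {μ : Measure α} {g f : α → 𝕜} (hg : Integrable g μ) (hf : MemLp f ⊤ μ) :
    Integrable (fun x => g x * f x) μ :=
  hg.mul_of_top_left hf

theorem ofReal_integral_norm_sq {α : Type*} [MeasurableSpace α] (μ : Measure α) (f : α → ℂ) :
    ((∫ x, ‖f x‖ ^ 2 ∂μ : ℝ) : ℂ) = ∫ x, conj (f x) * f x ∂μ := by
  rw [← integral_complex_ofReal]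
  exact integral_congr_ae (Eventually.of_forall fun x => by simp [Complex.conj_mul'])

section Circle

variable {μ : Measure ℂ}

theorem memLp_top_of_norm_le_on_circle (hμ : ∀ᵐ z ∂μ, ‖z‖ = 1) {f : ℂ → ℂ}
    (hf : AEStronglyMeasurable f μ) (C : ℝ) (hC : ∀ z, ‖z‖ = 1 → ‖f z‖ ≤ C) : MemLp f ⊤ μ :=
  memLp_top_of_bound hf C (by filter_upwards [hμ] with z hz using hC z hz)

theorem memLp_top_of_continuous (hμ : ∀ᵐ z ∂μ, ‖z‖ = 1) {f : ℂ → ℂ} (hf : Continuous f) :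
    MemLp f ⊤ μ := by
  obtain ⟨C, hC⟩ := (isCompact_sphere (0 : ℂ) 1).exists_bound_of_continuousOn hf.continuousOn
  exact memLp_top_of_norm_le_on_circle hμ hf.aestronglyMeasurable C
    fun z hz => hC z (mem_sphere_zero_iff_norm.mpr hz)

theorem memLp_top_cosL (hμ : ∀ᵐ z ∂μ, ‖z‖ = 1) (k : ℕ) : MemLp (cosL k) ⊤ μ :=
  memLp_top_of_norm_le_on_circle hμ (measurable_cosL k).aestronglyMeasurable 1
    fun _ hz => norm_cosL_le_one hz k

theorem memLp_top_sinL (hμ : ∀ᵐ z ∂μ, ‖z‖ = 1) (k : ℕ) : MemLp (sinL k) ⊤ μ :=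
  memLp_top_of_norm_le_on_circle hμ (measurable_sinL k).aestronglyMeasurable 1
    fun _ hz => norm_sinL_le_one hz k

theorem memLp_top_trigSum (hμ : ∀ᵐ z ∂μ, ‖z‖ = 1) (n : ℕ) (c d : ℕ → ℂ) :
    MemLp (trigSum n c d) ⊤ μ :=
  memLp_finsetSum _ fun k _ =>
    ((memLp_top_cosL hμ k).const_mul (c k)).add ((memLp_top_sinL hμ k).const_mul (d k))

theorem innR_comm (f g : ℂ → ℂ) : innR μ f g = innR μ g f :=
  integral_congr_ae (Eventually.of_forall fun _ => mul_comm _ _)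

theorem innR_congr_right {g f f' : ℂ → ℂ} (h : f =ᵐ[μ] f') : innR μ g f = innR μ g f' :=
  integral_congr_ae (by filter_upwards [h] with z hz; rw [hz])

theorem innR_const_mul_right (g f : ℂ → ℂ) (c : ℂ) :
    innR μ g (fun z => c * f z) = c * innR μ g f := by
  rw [innR, innR, ← integral_const_mul]
  exact integral_congr_ae (Eventually.of_forall fun _ => by ring)

theorem innR_add_right {g f₁ f₂ : ℂ → ℂ} (hg : Integrable g μ) (h₁ : MemLp f₁ ⊤ μ)
    (h₂ : MemLp f₂ ⊤ μ) :
    innR μ g (fun z => f₁ z + f₂ z) = innR μ g f₁ + innR μ g f₂ := by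
  simp only [innR, mul_add]
  exact integral_add (hg.mul_memLp_top h₁) (hg.mul_memLp_top h₂)

theorem innR_finsetSum_right {ι : Type*} (s : Finset ι) {g : ℂ → ℂ} {f : ι → ℂ → ℂ}
    (hg : Integrable g μ) (hf : ∀ i ∈ s, MemLp (f i) ⊤ μ) :
    innR μ g (fun z => ∑ i ∈ s, f i z) = ∑ i ∈ s, innR μ g (f i) := by
  simp only [innR, Finset.mul_sum]
  exact integral_finsetSum _ fun i hi => hg.mul_memLp_top (hf i hi)

theorem innR_mul_add_mul_left {A B f : ℂ → ℂ} (hA : Integrable A μ) (hB : Integrable B μ)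
    (hf : MemLp f ⊤ μ) (x y : ℂ) :
    innR μ (fun z => x * A z + y * B z) f = x * innR μ A f + y * innR μ B f := by
  simp only [innR, add_mul, mul_assoc]
  rw [integral_add ((hA.mul_memLp_top hf).const_mul x) ((hB.mul_memLp_top hf).const_mul y),
    integral_const_mul, integral_const_mul]

theorem integral_conj_pow_mul_eq_innR (hμ : ∀ᵐ z ∂μ, ‖z‖ = 1) {F : ℂ → ℂ} {s : ℕ} {q : ℂ[X]}
    (hF : ∀ᵐ z ∂μ, z ^ s * F z = q.eval z) (j : ℕ) :
    ∫ z, conj (z ^ j) * q.eval z ∂μ = innR μ F (fun z => z ^ ((s : ℤ) - j)) := by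
  refine integral_congr_ae ?_
  filter_upwards [hμ, hF] with z hz hzF
  have hz0 : z ≠ 0 := by rintro rfl; simp at hz
  rw [← hzF, map_pow, ← Complex.inv_eq_conj hz, zpow_sub₀ hz0, zpow_natCast, zpow_natCast]
  ring

theorem innR_pow (hμ : ∀ᵐ z ∂μ, ‖z‖ = 1) {g : ℂ → ℂ} (hg : Integrable g μ) (k : ℕ) :
    innR μ g (fun z => z ^ k) = innR μ g (cosL k) + I * innR μ g (sinL k) := by
  simp_rw [pow_eq_cosL_add_I_mul_sinL]
  rw [innR_add_right hg (memLp_top_cosL hμ k) ((memLp_top_sinL hμ k).const_mul I),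
    innR_const_mul_right]

theorem innR_inv_pow (hμ : ∀ᵐ z ∂μ, ‖z‖ = 1) {g : ℂ → ℂ} (hg : Integrable g μ) (k : ℕ) :
    innR μ g (fun z => (z ^ k)⁻¹) = innR μ g (cosL k) - I * innR μ g (sinL k) := by
  simp_rw [inv_pow_eq_cosL_sub_I_mul_sinL, sub_eq_add_neg, ← neg_mul]
  rw [innR_add_right hg (memLp_top_cosL hμ k) ((memLp_top_sinL hμ k).const_mul (-I)),
    innR_const_mul_right]

end Circle

def TrigOrth (μ : Measure ℂ) (n : ℕ) (g : ℂ → ℂ) : Prop :=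
  ∀ k < n, innR μ g (cosL k) = 0 ∧ innR μ g (sinL k) = 0

namespace TrigOrth

variable {μ : Measure ℂ} {n : ℕ} {g : ℂ → ℂ}

theorem innR_trigSum (hμ : ∀ᵐ z ∂μ, ‖z‖ = 1) (hg : Integrable g μ) (h : TrigOrth μ n g)
    (c d : ℕ → ℂ) : innR μ g (trigSum n c d) = 0 := by
  unfold trigSum
  rw [innR_finsetSum_right (f := fun k z => c k * cosL k z + d k * sinL k z) _ hg
    fun k _ => ((memLp_top_cosL hμ k).const_mul (c k)).add ((memLp_top_sinL hμ k).const_mul (d k))]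
  refine Finset.sum_eq_zero fun k hk => ?_
  obtain ⟨hc, hs⟩ := h k (Finset.mem_range.mp hk)
  rw [innR_add_right hg ((memLp_top_cosL hμ k).const_mul (c k))
    ((memLp_top_sinL hμ k).const_mul (d k)), innR_const_mul_right, innR_const_mul_right, hc, hs]
  ring

theorem innR_zpow (hμ : ∀ᵐ z ∂μ, ‖z‖ = 1) (hg : Integrable g μ) (h : TrigOrth μ n g) {m : ℤ}
    (hm : |m| < n) : innR μ g (fun z => z ^ m) = 0 := by
  obtain ⟨k, rfl | rfl⟩ := Int.eq_nat_or_neg m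
  · obtain ⟨hc, hs⟩ := h k (by simpa using hm)
    simp only [zpow_natCast]
    rw [innR_pow hμ hg, hc, hs, mul_zero, add_zero]
  · obtain ⟨hc, hs⟩ := h k (by simpa using hm)
    simp only [zpow_neg, zpow_natCast]
    rw [innR_inv_pow hμ hg, hc, hs, mul_zero, sub_zero]

theorem mul_add_mul (hμ : ∀ᵐ z ∂μ, ‖z‖ = 1) {A B : ℂ → ℂ} (hA : Integrable A μ)
    (hB : Integrable B μ) (hA' : TrigOrth μ n A) (hB' : TrigOrth μ n B) (x y : ℂ) :
    TrigOrth μ n (fun z => x * A z + y * B z) := fun k hk => by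
  rw [innR_mul_add_mul_left hA hB (memLp_top_cosL hμ k),
    innR_mul_add_mul_left hA hB (memLp_top_sinL hμ k), (hA' k hk).1, (hA' k hk).2,
    (hB' k hk).1, (hB' k hk).2]
  simp

end TrigOrth

section IsTrigPoly

variable {μ : Measure ℂ} {n : ℕ} {p q : ℂ} {F : ℂ → ℂ}

def IsTrigPoly (μ : Measure ℂ) (n : ℕ) (p q : ℂ) (f : ℂ → ℂ) : Prop :=
  ∃ c d : ℕ → ℂ, f =ᵐ[μ] fun z => p * cosL n z + q * sinL n z + trigSum n c d z

namespace IsTrigPoly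

theorem integrable [IsFiniteMeasure μ] (hμ : ∀ᵐ z ∂μ, ‖z‖ = 1) (h : IsTrigPoly μ n p q F) :
    Integrable F μ := by
  obtain ⟨c, d, hF⟩ := h
  refine Integrable.congr (MemLp.integrable le_top ?_) hF.symm
  exact (((memLp_top_cosL hμ n).const_mul p).add ((memLp_top_sinL hμ n).const_mul q)).add
    (memLp_top_trigSum hμ n c d)

theorem mul_add_mul {p' q' : ℂ} {G : ℂ → ℂ} (hF : IsTrigPoly μ n p q F)
    (hG : IsTrigPoly μ n p' q' G) (x y : ℂ) :
    IsTrigPoly μ n (x * p + y * p') (x * q + y * q') (fun z => x * F z + y * G z) := by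
  obtain ⟨c, d, hF⟩ := hF
  obtain ⟨c', d', hG⟩ := hG
  refine ⟨fun k => x * c k + y * c' k, fun k => x * d k + y * d' k, ?_⟩
  filter_upwards [hF, hG] with z hFz hGz
  rw [hFz, hGz, ← mul_trigSum_add_mul_trigSum]
  ring

theorem exists_eval_of_le_succ (hμ : ∀ᵐ z ∂μ, ‖z‖ = 1) (h : IsTrigPoly μ n 1 I F) {s : ℕ}
    (hs : n ≤ s + 1) :
    ∃ r ∈ degreeLT ℂ (s + n), ∀ᵐ z ∂μ, z ^ s * F z = (X ^ (s + n) + r).eval z := by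
  obtain ⟨c, d, hF⟩ := h
  refine ⟨trigPoly s n c d, trigPoly_mem_degreeLT s n c d, ?_⟩
  filter_upwards [hμ, hF] with z hz hFz
  have hz0 : z ≠ 0 := by rintro rfl; simp at hz
  rw [hFz, eval_add, eval_trigPoly hz0 hs, eval_pow, eval_X, one_mul,
    ← pow_eq_cosL_add_I_mul_sinL, pow_add]
  ring

theorem exists_eval_of_le (hμ : ∀ᵐ z ∂μ, ‖z‖ = 1) (h : IsTrigPoly μ n p q F)
    (hpq : p - I * q = 2) (hn : 0 < n) {s : ℕ} (hs : n ≤ s) :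
    ∃ r ∈ degreeLT ℂ (s + n), ∀ᵐ z ∂μ, z ^ s * F z = (X ^ (s + n) + r).eval z := by
  obtain ⟨c, d, hF⟩ := h
  refine ⟨C ((p + I * q) / 2) * X ^ (s - n) + trigPoly s n c d,
    add_mem ?_ (trigPoly_mem_degreeLT s n c d), ?_⟩
  · rw [mem_degreeLT]
    refine (degree_C_mul_X_pow_le _ _).trans_lt ?_
    exact_mod_cast (by omega : s - n < s + n)
  filter_upwards [hμ, hF] with z hz hFz
  have hz0 : z ≠ 0 := by rintro rfl; simp at hz
  simp only [eval_add, eval_mul, eval_C, eval_pow, eval_X]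
  rw [hFz, eval_trigPoly hz0 (by omega), mul_cosL_add_mul_sinL, hpq, pow_sub₀ _ hz0 hs, pow_add]
  field_simp
  ring

end IsTrigPoly

theorem TrigOrth.innR_eq [IsFiniteMeasure μ] (hμ : ∀ᵐ z ∂μ, ‖z‖ = 1) {g : ℂ → ℂ}
    (hg : Integrable g μ) (h : TrigOrth μ n g) (hF : IsTrigPoly μ n p q F) :
    innR μ g F = p * innR μ g (cosL n) + q * innR μ g (sinL n) := by
  obtain ⟨c, d, hF⟩ := hF
  have hcs : MemLp (fun z => p * cosL n z + q * sinL n z) ⊤ μ :=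
    ((memLp_top_cosL hμ n).const_mul p).add ((memLp_top_sinL hμ n).const_mul q)
  rw [innR_congr_right hF, innR_add_right hg hcs (memLp_top_trigSum hμ n c d),
    innR_add_right hg ((memLp_top_cosL hμ n).const_mul p) ((memLp_top_sinL hμ n).const_mul q),
    innR_const_mul_right, innR_const_mul_right, h.innR_trigSum hμ hg, add_zero]

end IsTrigPoly

section MonicOrth

variable {μ : Measure ℂ} [IsFiniteMeasure μ]

theorem integrable_of_continuous (hμ : ∀ᵐ z ∂μ, ‖z‖ = 1) {f : ℂ → ℂ} (hf : Continuous f) :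
    Integrable f μ :=
  (memLp_top_of_continuous hμ hf).integrable le_top

theorem integral_conj_eval_mul_eq_zero (hμ : ∀ᵐ z ∂μ, ‖z‖ = 1) {N : ℕ} {p r : ℂ[X]}
    (hp : ∀ j < N, ∫ z, conj (z ^ j) * p.eval z ∂μ = 0) (hr : r ∈ degreeLT ℂ N) :
    ∫ z, conj (r.eval z) * p.eval z ∂μ = 0 := by
  rcases eq_or_ne r 0 with rfl | hr0
  · simp
  have hrN : r.natDegree < N := by
    rw [mem_degreeLT, degree_eq_natDegree hr0] at hr; exact_mod_cast hr
  simp_rw [eval_eq_sum_range' hrN, map_sum, Finset.sum_mul, map_mul, mul_assoc]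
  rw [integral_finsetSum _ fun j _ => (integrable_of_continuous hμ (by fun_prop)).const_mul _]
  refine Finset.sum_eq_zero fun j hj => ?_
  rw [integral_const_mul, hp j (Finset.mem_range.mp hj), mul_zero]

theorem integral_norm_sq_eval_eq_of_sub_mem_degreeLT (hμ : ∀ᵐ z ∂μ, ‖z‖ = 1) {N : ℕ}
    {p q : ℂ[X]} (hpq : p - q ∈ degreeLT ℂ N)
    (hp : ∀ j < N, ∫ z, conj (z ^ j) * p.eval z ∂μ = 0)
    (hq : ∀ j < N, ∫ z, conj (z ^ j) * q.eval z ∂μ = 0) :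
    ∫ z, ‖p.eval z‖ ^ 2 ∂μ = ∫ z, ‖q.eval z‖ ^ 2 ∂μ := by
  have hsub : ∀ g : ℂ[X], (∀ j < N, ∫ z, conj (z ^ j) * g.eval z ∂μ = 0) →
      ∫ z, conj (p.eval z) * g.eval z ∂μ = ∫ z, conj (q.eval z) * g.eval z ∂μ := fun g hg => by
    have h := integral_conj_eval_mul_eq_zero hμ hg hpq
    simp only [eval_sub, map_sub, sub_mul] at h
    rwa [integral_sub (integrable_of_continuous hμ (by fun_prop))
      (integrable_of_continuous hμ (by fun_prop)), sub_eq_zero] at h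
  have h : ((∫ z, ‖p.eval z‖ ^ 2 ∂μ : ℝ) : ℂ) = ((∫ z, ‖q.eval z‖ ^ 2 ∂μ : ℝ) : ℂ) :=
    calc ((∫ z, ‖p.eval z‖ ^ 2 ∂μ : ℝ) : ℂ)
        = ∫ z, conj (p.eval z) * p.eval z ∂μ := ofReal_integral_norm_sq μ _
      _ = ∫ z, conj (q.eval z) * p.eval z ∂μ := hsub p hp
      _ = conj (∫ z, conj (p.eval z) * q.eval z ∂μ) := by
        rw [← integral_conj]; simp only [map_mul, Complex.conj_conj, mul_comm]
      _ = conj (∫ z, conj (q.eval z) * q.eval z ∂μ) := by rw [hsub q hq]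
      _ = ((∫ z, ‖q.eval z‖ ^ 2 ∂μ : ℝ) : ℂ) := by
        rw [← ofReal_integral_norm_sq μ, Complex.conj_ofReal]
  exact_mod_cast h

theorem integral_norm_sq_eval_eq_innR (hμ : ∀ᵐ z ∂μ, ‖z‖ = 1) {N s : ℕ} {Φ r : ℂ[X]}
    (hΦ : Φ.Monic) (hdeg : Φ.natDegree = N)
    (hΦorth : ∀ j < N, ∫ z, conj (z ^ j) * Φ.eval z ∂μ = 0) (hr : r ∈ degreeLT ℂ N)
    {F : ℂ → ℂ} (hF : ∀ᵐ z ∂μ, z ^ s * F z = (X ^ N + r).eval z)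
    (hForth : ∀ m : ℤ, (s : ℤ) - N < m → m ≤ s → innR μ F (fun z => z ^ m) = 0) :
    ((∫ z, ‖Φ.eval z‖ ^ 2 ∂μ : ℝ) : ℂ) = innR μ F (fun z => z ^ ((s : ℤ) - N)) := by
  set q : ℂ[X] := X ^ N + r
  have hq : ∀ j < N, ∫ z, conj (z ^ j) * q.eval z ∂μ = 0 := fun j hj => by
    rw [integral_conj_pow_mul_eq_innR hμ hF]; exact hForth _ (by omega) (by omega)
  have hΦq : Φ - q ∈ degreeLT ℂ N := by
    rw [sub_add_eq_sub_sub]; exact sub_mem (hΦ.sub_X_pow_mem_degreeLT hdeg) hr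
  rw [integral_norm_sq_eval_eq_of_sub_mem_degreeLT hμ hΦq hΦorth hq, ofReal_integral_norm_sq,
    ← integral_conj_pow_mul_eq_innR hμ hF]
  calc ∫ z, conj (q.eval z) * q.eval z ∂μ
      = ∫ z, conj (z ^ N) * q.eval z ∂μ + ∫ z, conj (r.eval z) * q.eval z ∂μ := by
        rw [← integral_add (integrable_of_continuous hμ (by fun_prop))
          (integrable_of_continuous hμ (by fun_prop))]
        simp only [q, eval_add, eval_pow, eval_X, map_add, add_mul]
    _ = ∫ z, conj (z ^ N) * q.eval z ∂μ := by
        rw [integral_conj_eval_mul_eq_zero hμ hq hr, add_zero]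

end MonicOrth

namespace OTP

variable (D : OTP) {n : ℕ}

instance isProbabilityMeasure : IsProbabilityMeasure D.μ := D.prob

theorem ae_norm_eq_one : ∀ᵐ z ∂D.μ, ‖z‖ = 1 := by
  rw [ae_iff]; simpa only [Set.compl_ofPred] using D.circ

def aSig (n : ℕ) (z : ℂ) : ℂ := D.a n * D.sig n z

def bPi (n : ℕ) (z : ℂ) : ℂ := D.b n * D.pii n z

theorem exists_isTrigPoly_aSig (hn : 1 ≤ n) : ∃ e : ℝ, IsTrigPoly D.μ n 1 e (D.aSig n) := by
  obtain ⟨c, d, e, h⟩ := D.sig_span n hn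
  refine ⟨e, fun k => c k, fun k => d k, ?_⟩
  filter_upwards [D.ae_norm_eq_one] with z hz
  rw [aSig, h z (by rintro rfl; simp at hz), one_mul, trigSum]

theorem isTrigPoly_bPi (hn : 1 ≤ n) : IsTrigPoly D.μ n 0 1 (D.bPi n) := by
  obtain ⟨c, d, h⟩ := D.pii_span n hn
  refine ⟨fun k => c k, fun k => d k, ?_⟩
  filter_upwards [D.ae_norm_eq_one] with z hz
  rw [bPi, h z (by rintro rfl; simp at hz), zero_mul, zero_add, one_mul, trigSum]

theorem integrable_aSig (hn : 1 ≤ n) : Integrable (D.aSig n) D.μ :=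
  (D.exists_isTrigPoly_aSig hn).choose_spec.integrable D.ae_norm_eq_one

theorem integrable_bPi (hn : 1 ≤ n) : Integrable (D.bPi n) D.μ :=
  (D.isTrigPoly_bPi hn).integrable D.ae_norm_eq_one

theorem trigOrth_aSig (hn : 1 ≤ n) : TrigOrth D.μ n (D.aSig n) := (D.sig_orth n hn).1

theorem trigOrth_bPi (hn : 1 ≤ n) : TrigOrth D.μ n (D.bPi n) := D.pii_orth n hn

theorem innR_aSig_sinL (hn : 1 ≤ n) : innR D.μ (D.aSig n) (sinL n) = 0 := (D.sig_orth n hn).2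

theorem innR_bPi_sinL (hn : 1 ≤ n) : innR D.μ (D.bPi n) (sinL n) = (D.b n : ℂ) ^ 2 := by
  have h := (D.trigOrth_bPi hn).innR_eq D.ae_norm_eq_one (D.integrable_bPi hn) (D.isTrigPoly_bPi hn)
  rw [show innR D.μ (D.bPi n) (D.bPi n) = (D.b n : ℂ) ^ 2 from (D.b_norm n hn).symm] at h
  simpa using h.symm

theorem innR_bPi_cosL (hn : 1 ≤ n) :
    innR D.μ (D.bPi n) (cosL n) = D.β n * (D.b n : ℂ) ^ 2 := by
  have hb : (D.b n : ℂ) ≠ 0 := Complex.ofReal_ne_zero.mpr (D.hb n).ne'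
  rw [D.β_def n hn, innR, innR, mul_comm, ← integral_const_mul]
  refine integral_congr_ae (Eventually.of_forall fun z => ?_)
  simp only [bPi]
  field_simp

theorem innR_aSig_bPi (hn : 1 ≤ n) : innR D.μ (D.aSig n) (D.bPi n) = 0 := by
  rw [(D.trigOrth_aSig hn).innR_eq D.ae_norm_eq_one (D.integrable_aSig hn) (D.isTrigPoly_bPi hn),
    D.innR_aSig_sinL hn]
  ring

theorem isTrigPoly_aSig (hn : 1 ≤ n) : IsTrigPoly D.μ n 1 (-D.β n) (D.aSig n) := by
  -- the `sin nθ`-coefficient is read off from `⟨b_n π_n, a_n σ_n⟩ = 0`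
  obtain ⟨e, he⟩ := D.exists_isTrigPoly_aSig hn
  have h := (D.trigOrth_bPi hn).innR_eq D.ae_norm_eq_one (D.integrable_bPi hn) he
  rw [innR_comm, D.innR_aSig_bPi hn, D.innR_bPi_cosL hn, D.innR_bPi_sinL hn] at h
  have hb : (D.b n : ℂ) ≠ 0 := Complex.ofReal_ne_zero.mpr (D.hb n).ne'
  have : (e : ℂ) = -D.β n := by
    have := pow_ne_zero 2 hb
    apply mul_right_cancel₀ this
    linear_combination -h
  rwa [← this]

theorem innR_aSig_cosL (hn : 1 ≤ n) : innR D.μ (D.aSig n) (cosL n) = (D.a n : ℂ) ^ 2 := by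
  have h := (D.trigOrth_aSig hn).innR_eq D.ae_norm_eq_one (D.integrable_aSig hn)
    (D.isTrigPoly_aSig hn)
  rw [D.innR_aSig_sinL hn,
    show innR D.μ (D.aSig n) (D.aSig n) = (D.a n : ℂ) ^ 2 from (D.a_norm n hn).symm] at h
  simpa using h.symm

def comb (n : ℕ) (x y : ℂ) : ℂ → ℂ := fun z => x * D.aSig n z + y * D.bPi n z

theorem isTrigPoly_comb (hn : 1 ≤ n) (x y : ℂ) :
    IsTrigPoly D.μ n x (y - x * D.β n) (D.comb n x y) := by
  have h := (D.isTrigPoly_aSig hn).mul_add_mul (D.isTrigPoly_bPi hn) x y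
  simp only [mul_one, mul_zero, add_zero, mul_neg, neg_add_eq_sub] at h
  exact h

theorem integrable_comb (hn : 1 ≤ n) (x y : ℂ) : Integrable (D.comb n x y) D.μ :=
  ((D.integrable_aSig hn).const_mul x).add ((D.integrable_bPi hn).const_mul y)

theorem trigOrth_comb (hn : 1 ≤ n) (x y : ℂ) : TrigOrth D.μ n (D.comb n x y) :=
  (D.trigOrth_aSig hn).mul_add_mul D.ae_norm_eq_one (D.integrable_aSig hn) (D.integrable_bPi hn)
    (D.trigOrth_bPi hn) x y

theorem innR_comb_cosL (hn : 1 ≤ n) (x y : ℂ) :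
    innR D.μ (D.comb n x y) (cosL n) = x * (D.a n : ℂ) ^ 2 + y * D.β n * (D.b n : ℂ) ^ 2 := by
  unfold comb
  rw [innR_mul_add_mul_left (D.integrable_aSig hn) (D.integrable_bPi hn)
    (memLp_top_cosL D.ae_norm_eq_one n), D.innR_aSig_cosL hn, D.innR_bPi_cosL hn, mul_assoc]

theorem innR_comb_sinL (hn : 1 ≤ n) (x y : ℂ) :
    innR D.μ (D.comb n x y) (sinL n) = y * (D.b n : ℂ) ^ 2 := by
  unfold comb
  rw [innR_mul_add_mul_left (D.integrable_aSig hn) (D.integrable_bPi hn)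
    (memLp_top_sinL D.ae_norm_eq_one n), D.innR_aSig_sinL hn, D.innR_bPi_sinL hn, mul_zero,
    zero_add]

theorem innR_comb_pow (hn : 1 ≤ n) (x y : ℂ) :
    innR D.μ (D.comb n x y) (fun z => z ^ n) =
      x * (D.a n : ℂ) ^ 2 + y * (D.β n + I) * (D.b n : ℂ) ^ 2 := by
  rw [innR_pow D.ae_norm_eq_one (D.integrable_comb hn x y), D.innR_comb_cosL hn,
    D.innR_comb_sinL hn]
  ring

theorem innR_comb_inv_pow (hn : 1 ≤ n) (x y : ℂ) :
    innR D.μ (D.comb n x y) (fun z => (z ^ n)⁻¹) =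
      x * (D.a n : ℂ) ^ 2 + y * (D.β n - I) * (D.b n : ℂ) ^ 2 := by
  rw [innR_inv_pow D.ae_norm_eq_one (D.integrable_comb hn x y), D.innR_comb_cosL hn,
    D.innR_comb_sinL hn]
  ring

end OTP

namespace OPUC

variable (D : OPUC) {n : ℕ}

theorem integral_norm_sq_Φ_two_mul_sub_one_eq_innR (hn : 1 ≤ n) :
    ((∫ z, ‖(D.Φ (2 * n - 1)).eval z‖ ^ 2 ∂D.μ : ℝ) : ℂ) =
      innR D.μ (D.comb n 1 (I + D.β n)) (fun z => (z ^ n)⁻¹) := by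
  have hμ := D.ae_norm_eq_one
  have hF : IsTrigPoly D.μ n 1 I (D.comb n 1 (I + D.β n)) := by
    simpa using D.isTrigPoly_comb hn 1 (I + D.β n)
  obtain ⟨r, hr, hrF⟩ := hF.exists_eval_of_le_succ hμ (s := n - 1) (by omega)
  rw [show n - 1 + n = 2 * n - 1 by omega] at hr hrF
  rw [integral_norm_sq_eval_eq_innR hμ (D.Φ_monic _) (D.Φ_deg _) (D.Φ_orth _) hr hrF
      fun m hm₁ hm₂ => (D.trigOrth_comb hn _ _).innR_zpow hμ (D.integrable_comb hn _ _)
        (abs_lt.mpr ⟨by omega, by omega⟩),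
    show ((n - 1 : ℕ) : ℤ) - ((2 * n - 1 : ℕ) : ℤ) = -(n : ℤ) by omega]
  simp only [zpow_neg, zpow_natCast]

theorem integral_norm_sq_Φ_two_mul_eq_innR (hn : 1 ≤ n) {x y : ℂ}
    (hlead : x - I * (y - x * D.β n) = 2)
    (hmoment : innR D.μ (D.comb n x y) (fun z => z ^ n) = 0) :
    ((∫ z, ‖(D.Φ (2 * n)).eval z‖ ^ 2 ∂D.μ : ℝ) : ℂ) =
      innR D.μ (D.comb n x y) (fun z => (z ^ n)⁻¹) := by
  have hμ := D.ae_norm_eq_one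
  obtain ⟨r, hr, hrF⟩ :=
    (D.isTrigPoly_comb hn x y).exists_eval_of_le hμ hlead (by omega) (s := n) le_rfl
  rw [← two_mul] at hr hrF
  rw [integral_norm_sq_eval_eq_innR hμ (D.Φ_monic _) (D.Φ_deg _) (D.Φ_orth _) hr hrF
      fun m hm₁ hm₂ => ?_,
    show ((n : ℕ) : ℤ) - ((2 * n : ℕ) : ℤ) = -(n : ℤ) by omega]
  · simp only [zpow_neg, zpow_natCast]
  rcases eq_or_lt_of_le hm₂ with rfl | hm₂
  · simpa only [zpow_natCast] using hmoment
  · exact (D.trigOrth_comb hn _ _).innR_zpow hμ (D.integrable_comb hn _ _)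
      (abs_lt.mpr ⟨by omega, by omega⟩)

theorem integral_norm_sq_Φ_two_mul_sub_one (hn : 1 ≤ n) :
    ∫ z, ‖(D.Φ (2 * n - 1)).eval z‖ ^ 2 ∂D.μ = D.a n ^ 2 + (1 + D.β n ^ 2) * D.b n ^ 2 := by
  have h := D.integral_norm_sq_Φ_two_mul_sub_one_eq_innR hn
  rw [D.innR_comb_inv_pow hn] at h
  have hval : 1 * (D.a n : ℂ) ^ 2 + (I + D.β n) * (D.β n - I) * (D.b n : ℂ) ^ 2 =
      ((D.a n ^ 2 + (1 + D.β n ^ 2) * D.b n ^ 2 : ℝ) : ℂ) := by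
    push_cast; linear_combination (-(D.b n : ℂ) ^ 2) * I_sq
  exact_mod_cast h.trans hval

theorem integral_norm_sq_Φ_two_mul (hn : 1 ≤ n) :
    ∫ z, ‖(D.Φ (2 * n)).eval z‖ ^ 2 ∂D.μ =
      4 * D.a n ^ 2 * D.b n ^ 2 / (D.a n ^ 2 + (1 + D.β n ^ 2) * D.b n ^ 2) := by
  set S : ℝ := D.a n ^ 2 + (1 + D.β n ^ 2) * D.b n ^ 2
  have hS : (S : ℂ) ≠ 0 := Complex.ofReal_ne_zero.mpr (by have := D.ha n; positivity)
  have hSc : (S : ℂ) = (D.a n : ℂ) ^ 2 + (1 + (D.β n : ℂ) ^ 2) * (D.b n : ℂ) ^ 2 := by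
    simp only [S]; push_cast; ring
  set x : ℂ := 2 * (1 - I * D.β n) * (D.b n : ℂ) ^ 2 / S
  set y : ℂ := 2 * I * (D.a n : ℂ) ^ 2 / S
  have hlead : x - I * (y - x * D.β n) = 2 := by
    simp only [x, y]; field_simp; rw [hSc]
    linear_combination (-(D.β n : ℂ) ^ 2 * (D.b n : ℂ) ^ 2 - (D.a n : ℂ) ^ 2) * I_sq
  have hmoment : innR D.μ (D.comb n x y) (fun z => z ^ n) = 0 := by
    rw [D.innR_comb_pow hn]; simp only [x, y]; field_simp
    linear_combination (2 * (D.a n : ℂ) ^ 2 * (D.b n : ℂ) ^ 2) * I_sq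
  have h := D.integral_norm_sq_Φ_two_mul_eq_innR hn hlead hmoment
  rw [D.innR_comb_inv_pow hn] at h
  have hval : x * (D.a n : ℂ) ^ 2 + y * (D.β n - I) * (D.b n : ℂ) ^ 2 =
      ((4 * D.a n ^ 2 * D.b n ^ 2 / S : ℝ) : ℂ) := by
    simp only [x, y]; push_cast; field_simp
    linear_combination (-2 * (D.a n : ℂ) ^ 2 * (D.b n : ℂ) ^ 2) * I_sq
  exact_mod_cast h.trans hval

end OPUC

/-- For `n ≥ 1`, `κ_{2n-1}² κ_{2n}² = (1/4) a_n^(-2) b_n^(-2)`. -/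
theorem kappa_product (D : OPUC) (n : ℕ) (hn : 1 ≤ n) :
    (D.κ (2 * n - 1)) ^ 2 * (D.κ (2 * n)) ^ 2 =
      (1 / 4) * ((D.a n) ^ 2)⁻¹ * ((D.b n) ^ 2)⁻¹ := by
  have h₁ := D.κ_def (2 * n - 1)
  have h₂ := D.κ_def (2 * n)
  rw [D.integral_norm_sq_Φ_two_mul_sub_one hn] at h₁
  rw [D.integral_norm_sq_Φ_two_mul hn] at h₂
  rw [eq_inv_of_mul_eq_one_left h₁, eq_inv_of_mul_eq_one_left h₂, inv_div]
  have ha := D.ha n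
  have hb := D.hb n
  field_simp
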